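/- Let k, n be integers with 2 ≤ k ≤ n/2, let R be a commutative ring, and let M be a k × n matrix over R. For every r ∈ ℤ/nℤ and every m in the cyclic closed interval [r+k−1, r−1], the determinant of the k × k matrix whose (i,j) entry (1 ≤ i,j ≤ k) is P([r+i−1]^{k−1} ∪ {m+j−1}) equals (∏_{l=0}^{k−2} P([r+l]^k)) · P([m]^k). -/

import Mathlib

/-!
Write `k = K + 1`, `m = r + d` with `K ≤ d < n`, and `v_t` for column `t` of `M`.

Replacing `M` by its columns shifted by `r - 1` multiplies each Plücker coordinate by `(-1)^K` for
every column that wraps from `n` to `1`. On the left these signs split into a row factor and a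
column factor of the matrix, and together they are the signs picked up by the right-hand side. So
one may take `r = 1`; then, up to a sign of the same kind for the column `m + j`, the `(i, j)`
entry is `det (v_{1+i}, …, v_{i+K}, v_{m+j})`.

That determinant is linear in its last column `w_j = v_{m+j}`, so the matrix is `C * W` with
`W = (w_0 … w_K)`. Taking `w_j = v_{1+K+j}` instead makes `C * W` upper triangular with diagonal
`det (v_{1+i}, …, v_{1+i+K})`; cancelling `det W` for generic columns gives
`det C = ∏_{l<K} det (v_{1+l}, …, v_{1+l+K})`.
-/

/-- Representative of `x : ZMod n` in `{1, …, n}`. -/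
def rep (n : ℕ) (x : ZMod n) : ℕ := if x.val = 0 then n else x.val

/-- The cyclic segment `[r]^ℓ = {r, r+1, …, r+ℓ-1}` in `ZMod n`. -/
def cSeg (n : ℕ) (r : ZMod n) (ℓ : ℕ) : Finset (ZMod n) :=
  (Finset.range ℓ).image (fun t : ℕ => r + (t : ZMod n))

/-- The cyclic closed interval `[a,b] = {a, a+1, …, b}` in `ZMod n`. -/
def cIcc (n : ℕ) (a b : ZMod n) : Finset (ZMod n) := cSeg n a ((b - a).val + 1)

/-- The Plücker coordinate `P(I)`: the determinant of the `k × k` submatrix of `M` on the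
columns indexed by `I`, taken in increasing order of the representatives in `{1,…,n}`;
it is `0` if `I` is not a `k`-subset. -/
noncomputable def pluck {R : Type*} [CommRing R] {k n : ℕ}
    (M : Matrix (Fin k) (ZMod n) R) (I : Finset (ZMod n)) : R :=
  if h : (I.image (rep n)).card = k ∧ I.card = k then
    Matrix.det (Matrix.of fun i j : Fin k =>
      M i ((((I.image (rep n)).orderIsoOfFin h.1 j : ℕ) : ZMod n)))
  else 0

open Finset

section Rep

variable {n : ℕ}

lemma rep_zero : rep n 0 = n := by simp [rep]

variable [NeZero n]

lemma rep_natCast {c : ℕ} (h1 : 1 ≤ c) (h2 : c ≤ n) : rep n c = c := by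
  rcases h2.eq_or_lt with rfl | h
  · simp [rep]
  · rw [rep, ZMod.val_natCast_of_lt h, if_neg (by omega)]

lemma rep_one_add_natCast {c : ℕ} (hc : c < n) : rep n (1 + c) = c + 1 := by
  rw [← rep_natCast (n := n) (by omega : 1 ≤ c + 1) hc]
  push_cast
  rw [add_comm]

lemma rep_one_add_add_natCast {s t : ℕ} (h : s + t < n) :
    rep n (1 + (s : ZMod n) + t) = s + t + 1 := by
  rw [add_assoc, ← Nat.cast_add, rep_one_add_natCast h]

lemma natCast_rep (x : ZMod n) : (rep n x : ZMod n) = x := by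
  unfold rep
  split_ifs with h
  · rw [ZMod.natCast_self, eq_comm, ← ZMod.val_eq_zero, h]
  · exact ZMod.natCast_zmod_val x

lemma rep_le (x : ZMod n) : rep n x ≤ n := by
  have := ZMod.val_lt x
  unfold rep
  split <;> omega

lemma rep_pos (x : ZMod n) : 0 < rep n x := by
  unfold rep
  split
  · exact Nat.pos_of_neZero n
  · omega

lemma rep_injective : Function.Injective (rep n) :=
  Function.LeftInverse.injective natCast_rep

lemma rep_add_one {x : ZMod n} (hx : x ≠ 0) : rep n (x + 1) = rep n x + 1 := by
  have hval : x.val ≠ 0 := by rwa [ne_eq, ZMod.val_eq_zero]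
  rw [← ZMod.natCast_zmod_val x, add_comm, rep_one_add_natCast (ZMod.val_lt x),
    rep_natCast (by omega) (ZMod.val_lt x).le]

end Rep

section Segments

variable {n : ℕ}

lemma injOn_add_natCast (s : ZMod n) {ℓ : ℕ} (hℓ : ℓ ≤ n) :
    Set.InjOn (fun t : ℕ => s + (t : ZMod n)) (range ℓ) := by
  intro a ha b hb hab
  simp only [coe_range, Set.mem_Iio] at ha hb
  have := (ZMod.natCast_eq_natCast_iff' a b n).1 (add_left_cancel hab)
  rwa [Nat.mod_eq_of_lt (by omega), Nat.mod_eq_of_lt (by omega)] at this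

lemma card_cSeg (s : ZMod n) {ℓ : ℕ} (hℓ : ℓ ≤ n) : (cSeg n s ℓ).card = ℓ := by
  rw [cSeg, card_image_of_injOn (injOn_add_natCast s hℓ), card_range]

lemma prod_cSeg {M : Type*} [CommMonoid M] (f : ZMod n → M) (s : ZMod n) {ℓ : ℕ}
    (hℓ : ℓ ≤ n) :
    ∏ x ∈ cSeg n s ℓ, f x = ∏ t ∈ range ℓ, f (s + t) :=
  prod_image (injOn_add_natCast s hℓ)

lemma image_add_cSeg (s c : ZMod n) (ℓ : ℕ) :
    (cSeg n s ℓ).image (· + c) = cSeg n (s + c) ℓ := by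
  rw [cSeg, cSeg, image_image]
  exact image_congr fun t _ => by simp only [Function.comp_apply]; ring

lemma image_univ_add_natCast (s : ZMod n) (ℓ : ℕ) :
    univ.image (fun t : Fin ℓ => s + (t : ℕ)) = cSeg n s ℓ := by
  ext x
  simp only [cSeg, mem_image, mem_univ, true_and, mem_range]
  exact ⟨fun ⟨t, ht⟩ => ⟨t, t.isLt, ht⟩, fun ⟨t, ht, hx⟩ => ⟨⟨t, ht⟩, hx⟩⟩

lemma prod_prod_cSeg_comm {M : Type*} [CommMonoid M] (f : ZMod n → M) (s : ZMod n) {K : ℕ}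
    (hK : K + 1 ≤ n) :
    ∏ i ∈ range (K + 1), ∏ x ∈ cSeg n (s + i) K, f x =
      ∏ l ∈ range K, ∏ x ∈ cSeg n (s + l) (K + 1), f x := by
  -- both sides are the product of `f (s + i + t)` over `i ≤ K` and `t < K`
  simp_rw [prod_cSeg f _ (by omega : K ≤ n), prod_cSeg f _ hK]
  rw [prod_comm]
  exact prod_congr rfl fun t _ => prod_congr rfl fun i _ => by congr 1; ring

lemma exists_eq_add_of_mem_cIcc {k : ℕ} (hk : 0 < k) (hkn : k < n) {r m : ZMod n}
    (hm : m ∈ cIcc n (r + k - 1) (r - 1)) : ∃ d : ℕ, k - 1 ≤ d ∧ d < n ∧ m = r + d := by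
  have : NeZero n := ⟨by omega⟩
  have hlen : (r - 1 - (r + k - 1)).val = n - k := by
    rw [show r - 1 - (r + k - 1) = ((n - k : ℕ) : ZMod n) by
      rw [Nat.cast_sub hkn.le, ZMod.natCast_self]; ring, ZMod.val_natCast_of_lt (by omega)]
  rw [cIcc, hlen, cSeg, mem_image] at hm
  obtain ⟨t, ht, rfl⟩ := hm
  rw [mem_range] at ht
  refine ⟨k - 1 + t, by omega, by omega, ?_⟩
  push_cast [Nat.cast_sub hk]
  ring

end Segments

section Pluecker

variable {R : Type*} [CommRing R] {n : ℕ}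

lemma pluck_eq_zero_of_card_ne {k : ℕ} (M : Matrix (Fin k) (ZMod n) R) {I : Finset (ZMod n)}
    (h : I.card ≠ k) : pluck M I = 0 :=
  dif_neg fun h' => h h'.2

variable [NeZero n]

lemma pluck_image_eq_det {k : ℕ} (M : Matrix (Fin k) (ZMod n) R) {f : Fin k → ZMod n}
    (hf : StrictMono (rep n ∘ f)) : pluck M (univ.image f) = (M.submatrix id f).det := by
  have hcard : (univ.image f).card = k := by
    rw [card_image_of_injective _ hf.injective.of_comp, card_univ,
      Fintype.card_fin]
  have hcard' : ((univ.image f).image (rep n)).card = k := by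
    rwa [card_image_of_injective _ rep_injective]
  have hsort : (fun j => rep n (f j)) = ((univ.image f).image (rep n)).orderEmbOfFin hcard' :=
    orderEmbOfFin_unique hcard' (fun j => mem_image_of_mem _ (mem_image_of_mem _ (mem_univ j))) hf
  rw [pluck, dif_pos ⟨hcard', hcard⟩]
  congr 1
  ext i j
  rw [Matrix.of_apply, coe_orderIsoOfFin_apply, ← congrFun hsort j, natCast_rep]
  rfl

lemma exists_strictMono_rep_comp {k : ℕ} {I : Finset (ZMod n)} (h : I.card = k) :
    ∃ f : Fin k → ZMod n, StrictMono (rep n ∘ f) ∧ univ.image f = I := by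
  have hcard : (I.image (rep n)).card = k := by rwa [card_image_of_injective _ rep_injective]
  set e := (I.image (rep n)).orderEmbOfFin hcard
  have hrep : ∀ j, rep n (e j : ZMod n) = e j := by
    intro j
    obtain ⟨x, -, hx⟩ := mem_image.1 (orderEmbOfFin_mem _ hcard j)
    rw [← hx, natCast_rep]
  have hf : StrictMono (rep n ∘ fun j => (e j : ZMod n)) := by
    intro a b hab
    simp only [Function.comp_apply, hrep]
    exact e.strictMono hab
  refine ⟨_, hf, eq_of_subset_of_card_le (fun x hx => ?_) ?_⟩
  · obtain ⟨j, -, rfl⟩ := mem_image.1 hx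
    obtain ⟨y, hy, hy'⟩ := mem_image.1 (orderEmbOfFin_mem _ hcard j)
    rwa [← hy', natCast_rep]
  · rw [h, card_image_of_injective _ hf.injective.of_comp, card_univ,
      Fintype.card_fin]

end Pluecker

section Columns

variable {α : Type*} {K : ℕ}

lemma image_univ_snoc [DecidableEq α] (g : Fin K → α) (x : α) :
    univ.image (Fin.snoc g x : Fin (K + 1) → α) = insert x (univ.image g) := by
  apply coe_injective
  simp [Set.image_univ, Fin.range_snoc]

lemma image_univ_cons [DecidableEq α] (g : Fin K → α) (x : α) :
    univ.image (Fin.cons x g : Fin (K + 1) → α) = insert x (univ.image g) := by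
  apply coe_injective
  simp [Set.image_univ, Fin.range_cons]

lemma strictMono_snoc [Preorder α] {g : Fin K → α} {x : α} (hg : StrictMono g)
    (hx : ∀ t, g t < x) : StrictMono (Fin.snoc g x : Fin (K + 1) → α) := by
  rw [← Fin.insertNth_last', Fin.strictMono_insertNth_iff]
  exact ⟨hg, fun t _ => hx t, fun t h => absurd h (not_le.2 (Fin.castSucc_lt_last t))⟩

lemma det_submatrix_snoc {R : Type*} [CommRing R] (A : Matrix (Fin (K + 1)) α R)
    (g : Fin K → α) (x : α) :
    (A.submatrix id (Fin.snoc g x)).det = (-1) ^ K * (A.submatrix id (Fin.cons x g)).det := by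
  rw [Fin.snoc_eq_cons_rotate]
  change ((A.submatrix id (Fin.cons x g)).submatrix id (finRotate (K + 1))).det = _
  rw [Matrix.det_permute', sign_finRotate, Nat.add_sub_cancel]
  simp

lemma det_eq_prod_mul_prod_mul_det {R : Type*} [CommRing R] {m : ℕ} {A : Matrix (Fin m) (Fin m) R}
    {B : Fin m → Fin m → R} (u w : Fin m → R) (h : ∀ i j, A i j = u i * w j * B i j) :
    A.det = (∏ i, u i) * (∏ j, w j) * (Matrix.of B).det := by
  rw [show A = Matrix.of fun i j => u i * (Matrix.of fun i j => w j * Matrix.of B i j) i j by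
      ext i j; simp [h, mul_assoc],
    Matrix.det_mul_column, Matrix.det_mul_row, mul_assoc]

end Columns

section Shift

variable {R : Type*} [CommRing R] {n K : ℕ}

lemma pluck_image_add_one (hn : 1 < n) (M : Matrix (Fin (K + 1)) (ZMod n) R)
    (I : Finset (ZMod n)) :
    pluck M (I.image (· + 1)) =
      (if (0 : ZMod n) ∈ I then (-1) ^ K else 1) * pluck (M.submatrix id (· + 1)) I := by
  have : NeZero n := ⟨by omega⟩
  by_cases hI : I.card = K + 1
  swap
  · rw [pluck_eq_zero_of_card_ne _ hI, pluck_eq_zero_of_card_ne, mul_zero]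
    rwa [card_image_of_injective _ (add_left_injective 1)]
  obtain ⟨e, he, rfl⟩ := exists_strictMono_rep_comp hI
  rw [pluck_image_eq_det _ he, image_image, Matrix.submatrix_submatrix, Function.id_comp]
  split_ifs with h0
  · have hlast : e (Fin.last K) = 0 := by
      obtain ⟨t, -, ht⟩ := mem_image.1 h0
      rcases (Fin.le_last t).eq_or_lt with rfl | hlt
      · exact ht
      · have := he hlt
        simp only [Function.comp_apply, ht, rep_zero] at this
        exact absurd (rep_le _) (not_le.2 this)
    have hne : ∀ t : Fin K, e t.castSucc ≠ 0 := fun t h =>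
      (Fin.castSucc_lt_last t).ne (he.injective (by simp [h, hlast]))
    set g : Fin K → ZMod n := fun t => e t.castSucc + 1
    have hsnoc : (· + 1) ∘ e = Fin.snoc g 1 := by
      funext t
      refine Fin.lastCases ?_ (fun t => ?_) t <;> simp [g, hlast]
    have hg : ∀ t, rep n (g t) = rep n (e t.castSucc) + 1 := fun t => rep_add_one (hne t)
    have hcons : StrictMono (rep n ∘ Fin.cons 1 g) := by
      rw [Fin.comp_cons, Fin.strictMono_cons]
      refine ⟨fun t => ?_, fun a b hab => ?_⟩
      · rw [Function.comp_apply, hg, ← Nat.cast_one, rep_natCast le_rfl (by omega)]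
        exact Nat.succ_lt_succ (rep_pos _)
      · simp only [Function.comp_apply, hg]
        exact Nat.succ_lt_succ (he (Fin.castSucc_lt_castSucc_iff.2 hab))
    rw [hsnoc, image_univ_snoc, ← image_univ_cons, pluck_image_eq_det _ hcons,
      det_submatrix_snoc, ← mul_assoc, ← pow_add, Even.neg_one_pow ⟨K, rfl⟩, one_mul]
  · have hmono : StrictMono (rep n ∘ (· + 1) ∘ e) := by
      intro a b hab
      have hne : ∀ t, e t ≠ 0 := fun t h => h0 (mem_image.2 ⟨t, mem_univ t, h⟩)
      simp only [Function.comp_apply, rep_add_one (hne _)]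
      exact Nat.succ_lt_succ (he hab)
    rw [pluck_image_eq_det _ hmono, one_mul]

/-- The sign that column `x` picks up in `b` shifts by one: each shift moves the column `0`, the
last one in `rep` order, to the first place, past the `K` others. -/
def wrapSign (K b : ℕ) (x : ZMod n) : R :=
  ∏ u ∈ range b, if x + u = 0 then (-1) ^ K else 1

lemma pluck_image_add_natCast (hn : 1 < n) (M : Matrix (Fin (K + 1)) (ZMod n) R)
    (I : Finset (ZMod n)) (b : ℕ) :
    pluck M (I.image (· + (b : ZMod n))) =
      (∏ x ∈ I, wrapSign K b x) * pluck (M.submatrix id (· + (b : ZMod n))) I := by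
  induction b generalizing M with
  | zero =>
    simp only [Nat.cast_zero, add_zero, image_id', wrapSign, range_zero, prod_empty, prod_const_one,
      one_mul]
    rfl
  | succ b ih =>
    have himage : I.image (· + ((b + 1 : ℕ) : ZMod n)) =
        (I.image (· + (b : ZMod n))).image (· + 1) := by
      rw [image_image]
      exact image_congr fun x _ => by simp only [Function.comp_apply]; push_cast; ring
    have hsub : M.submatrix id (· + ((b + 1 : ℕ) : ZMod n)) =
        (M.submatrix id (· + 1)).submatrix id (· + (b : ZMod n)) := by
      rw [Matrix.submatrix_submatrix]
      congr
      funext x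
      simp only [Function.comp_apply]
      push_cast
      ring
    have hzero : (if (0 : ZMod n) ∈ I.image (· + (b : ZMod n)) then (-1 : R) ^ K else 1) =
        ∏ x ∈ I, if x + b = 0 then (-1) ^ K else 1 := by
      simp [add_eq_zero_iff_eq_neg, prod_ite_eq']
    rw [himage, pluck_image_add_one hn, ih, hsub, hzero]
    simp only [wrapSign, prod_range_succ, prod_mul_distrib]
    ring

lemma wrapSign_one_add_natCast {d t : ℕ} (hd : d < n) (ht : t < n) :
    wrapSign K d (1 + (t : ZMod n)) = if n ≤ d + t then (-1 : R) ^ K else 1 := by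
  have hiff : ∀ u ∈ range d, (1 + (t : ZMod n) + u = 0 ↔ u = n - 1 - t) := by
    intro u hu
    rw [mem_range] at hu
    rw [show 1 + (t : ZMod n) + u = ((1 + t + u : ℕ) : ZMod n) by push_cast; ring,
      ZMod.natCast_eq_zero_iff]
    constructor
    · intro h
      have := Nat.eq_of_dvd_of_lt_two_mul (by omega) h (by omega)
      omega
    · intro h
      rw [show 1 + t + u = n by omega]
  rw [wrapSign, prod_congr rfl fun u hu => if_congr (hiff u hu) rfl rfl, prod_ite_eq']
  exact if_congr (by rw [mem_range]; omega) rfl rfl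

lemma pluck_image_add_natCast_union_singleton (hn : 1 < n)
    (M : Matrix (Fin (K + 1)) (ZMod n) R) {S : Finset (ZMod n)} (hS : S.card = K) (y : ZMod n)
    (b : ℕ) :
    pluck M ((S ∪ {y}).image (· + (b : ZMod n))) =
      (∏ x ∈ S, wrapSign K b x) * wrapSign K b y *
        pluck (M.submatrix id (· + (b : ZMod n))) (S ∪ {y}) := by
  rw [pluck_image_add_natCast hn]
  by_cases hy : y ∈ S
  · rw [union_eq_left.2 (singleton_subset_iff.2 hy), pluck_eq_zero_of_card_ne _ (by omega),
      mul_zero, mul_zero]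
  · rw [prod_union (disjoint_singleton_right.2 hy), prod_singleton]

lemma pluck_cSeg_add_natCast (hn : 1 < n) (M : Matrix (Fin (K + 1)) (ZMod n) R) (s : ZMod n)
    (ℓ b : ℕ) :
    pluck M (cSeg n (s + b) ℓ) =
      (∏ x ∈ cSeg n s ℓ, wrapSign K b x) *
        pluck (M.submatrix id (· + (b : ZMod n))) (cSeg n s ℓ) := by
  rw [← pluck_image_add_natCast hn, image_add_cSeg]

theorem det_pluck_cSeg_union_add_natCast (hn : 1 < n) (hKn : K < n)
    (M : Matrix (Fin (K + 1)) (ZMod n) R) (b d : ℕ) :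
    (Matrix.of fun i j : Fin (K + 1) =>
      pluck M (cSeg n (1 + (i : ℕ) + b) K ∪ {1 + (d : ZMod n) + (j : ℕ) + b})).det =
      (∏ i ∈ range (K + 1), ∏ x ∈ cSeg n (1 + i) K, wrapSign K b x) *
        (∏ x ∈ cSeg n (1 + d) (K + 1), wrapSign K b x) *
        (Matrix.of fun i j : Fin (K + 1) => pluck (M.submatrix id (· + (b : ZMod n)))
          (cSeg n (1 + (i : ℕ)) K ∪ {1 + (d : ZMod n) + (j : ℕ)})).det := by
  have hentry : ∀ i j : Fin (K + 1),
      pluck M (cSeg n (1 + (i : ℕ) + b) K ∪ {1 + (d : ZMod n) + (j : ℕ) + b}) =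
        (∏ x ∈ cSeg n (1 + (i : ℕ)) K, wrapSign K b x) *
          wrapSign K b (1 + (d : ZMod n) + ((j : ℕ) : ZMod n)) *
          pluck (M.submatrix id (· + (b : ZMod n)))
            (cSeg n (1 + (i : ℕ)) K ∪ {1 + (d : ZMod n) + (j : ℕ)}) := fun i j => by
    rw [← image_add_cSeg, ← image_singleton (· + (b : ZMod n)), ← image_union,
      pluck_image_add_natCast_union_singleton hn M (card_cSeg _ hKn.le)]
  refine (det_eq_prod_mul_prod_mul_det _ _ hentry).trans ?_
  rw [Fin.prod_univ_eq_prod_range (fun i => ∏ x ∈ cSeg n (1 + (i : ZMod n)) K, wrapSign K b x),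
      prod_cSeg _ _ hKn, Fin.prod_univ_eq_prod_range
        (fun j => wrapSign K b (1 + (d : ZMod n) + (j : ZMod n)))]

end Shift

section Windows

variable {R : Type*} [CommRing R] {K : ℕ}

def window (v : ℕ → Fin (K + 1) → R) (s : ℕ) : Matrix (Fin (K + 1)) (Fin (K + 1)) R :=
  Matrix.of fun a t => v (s + t) a

/-- Row `i` is the linear form `w ↦ det (v_i, …, v_{i+K-1}, w)`, by Cramer's rule. -/
def windowCofactors (v : ℕ → Fin (K + 1) → R) : Matrix (Fin (K + 1)) (Fin (K + 1)) R :=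
  Matrix.of fun i a => (window v i).adjugate (Fin.last K) a

lemma of_det_updateCol_window_eq_mul (v : ℕ → Fin (K + 1) → R)
    (w : Matrix (Fin (K + 1)) (Fin (K + 1)) R) :
    (Matrix.of fun i j : Fin (K + 1) =>
      ((window v i).updateCol (Fin.last K) fun a => w a j).det) = windowCofactors v * w := by
  ext i j
  rw [Matrix.of_apply, ← Matrix.cramer_apply, Matrix.cramer_eq_adjugate_mulVec]
  rfl

lemma det_windowCofactors_mul_det_window (v : ℕ → Fin (K + 1) → R) :
    (windowCofactors v).det * (window v K).det = ∏ l ∈ range (K + 1), (window v l).det := by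
  rw [← Matrix.det_mul, ← of_det_updateCol_window_eq_mul, Matrix.det_of_isUpperTriangular,
    ← Fin.prod_univ_eq_prod_range]
  · refine prod_congr rfl fun i _ => ?_
    rw [Matrix.of_apply]
    congr
    conv_rhs => rw [← Matrix.updateCol_eq_self (window v i) (Fin.last K)]
    simp [window, add_comm]
  · intro i j (hji : j < i)
    have hji' : (j : ℕ) < i := hji
    refine Matrix.det_zero_of_column_eq (i := ⟨K + j - i, by omega⟩) (j := Fin.last K)
      (Fin.ne_of_lt (by rw [Fin.lt_def]; simp; omega)) fun a => ?_
    simp only [Matrix.updateCol_apply, window, Matrix.of_apply, Fin.ext_iff, Fin.val_last,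
      if_true]
    rw [if_neg (by omega), show (i : ℕ) + (K + j - i) = K + j by omega]

lemma window_map {S : Type*} [CommRing S] (φ : R →+* S) (v : ℕ → Fin (K + 1) → R)
    (s : ℕ) :
    window (fun t a => φ (v t a)) s = φ.mapMatrix (window v s) :=
  rfl

lemma windowCofactors_map {S : Type*} [CommRing S] (φ : R →+* S)
    (v : ℕ → Fin (K + 1) → R) :
    windowCofactors (fun t a => φ (v t a)) = φ.mapMatrix (windowCofactors v) := by
  ext i a
  simp only [windowCofactors, window_map, ← RingHom.map_adjugate, Matrix.of_apply]
  rfl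

lemma det_window_X_ne_zero :
    (window (K := K) (fun t a => (MvPolynomial.X (t, a) : MvPolynomial (ℕ × Fin (K + 1)) ℤ))
      K).det ≠ 0 := by
  intro h
  have h1 := congrArg (MvPolynomial.eval fun p : ℕ × Fin (K + 1) =>
    if p.1 = K + p.2 then (1 : ℤ) else 0) h
  rw [RingHom.map_det, map_zero, ← window_map] at h1
  simp only [MvPolynomial.eval_X] at h1
  have h2 : window (fun t (a : Fin (K + 1)) => if t = K + a then (1 : ℤ) else 0) K = 1 := by
    ext a t
    simp [window, Matrix.one_apply, Fin.ext_iff, eq_comm]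
  rw [h2, Matrix.det_one] at h1
  exact one_ne_zero h1

theorem det_windowCofactors (v : ℕ → Fin (K + 1) → R) :
    (windowCofactors v).det = ∏ l ∈ range K, (window v l).det := by
  -- a polynomial identity: prove it for generic columns, where `det (window v K)` cancels
  set X : ℕ → Fin (K + 1) → MvPolynomial (ℕ × Fin (K + 1)) ℤ :=
    fun t a => MvPolynomial.X (t, a)
  have hX : (windowCofactors X).det = ∏ l ∈ range K, (window X l).det :=
    mul_right_cancel₀ det_window_X_ne_zero
      (by rw [det_windowCofactors_mul_det_window, prod_range_succ])
  set φ := MvPolynomial.eval₂Hom (Int.castRingHom R) fun p : ℕ × Fin (K + 1) => v p.1 p.2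
  have hv : v = fun t a => φ (X t a) := by
    funext t a
    simp [φ, X]
  rw [hv, windowCofactors_map, ← RingHom.map_det, hX, map_prod]
  simp only [window_map, RingHom.map_det]

theorem det_det_updateCol_window (v : ℕ → Fin (K + 1) → R)
    (w : Matrix (Fin (K + 1)) (Fin (K + 1)) R) :
    (Matrix.of fun i j : Fin (K + 1) =>
      ((window v i).updateCol (Fin.last K) fun a => w a j).det).det
      = (∏ l ∈ range K, (window v l).det) * w.det := by
  rw [of_det_updateCol_window_eq_mul, Matrix.det_mul, det_windowCofactors]

end Windows

section BaseFrame

variable {R : Type*} [CommRing R] {n K : ℕ}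

lemma pluck_cSeg_one_add (N : Matrix (Fin (K + 1)) (ZMod n) R) {s : ℕ} (hs : s + K < n) :
    pluck N (cSeg n (1 + s) (K + 1)) =
      (N.submatrix id fun t : Fin (K + 1) => 1 + (s : ZMod n) + (t : ℕ)).det := by
  have : NeZero n := ⟨by omega⟩
  rw [← image_univ_add_natCast, pluck_image_eq_det]
  intro a b hab
  have := a.isLt
  have := b.isLt
  simp only [Function.comp_apply]
  rw [rep_one_add_add_natCast (by omega), rep_one_add_add_natCast (by omega)]
  exact Nat.succ_lt_succ (Nat.add_lt_add_left hab s)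

lemma pluck_cSeg_union_singleton (N : Matrix (Fin (K + 1)) (ZMod n) R) {i d j : ℕ}
    (hi : i ≤ K) (hj : j ≤ K) (hKd : K ≤ d) (hdn : d < n) (hKn : 2 * K < n) :
    pluck N (cSeg n (1 + i) K ∪ {1 + (d : ZMod n) + j}) =
      wrapSign K d (1 + (j : ZMod n)) *
        (N.submatrix id (Fin.snoc (fun t : Fin K => 1 + (i : ZMod n) + (t : ℕ))
          (1 + (d : ZMod n) + j))).det := by
  have : NeZero n := ⟨by omega⟩
  set g : Fin K → ZMod n := fun t => 1 + (i : ZMod n) + (t : ℕ)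
  set y : ZMod n := 1 + (d : ZMod n) + j
  have hg : ∀ t, rep n (g t) = i + t + 1 := fun t => rep_one_add_add_natCast (by omega)
  have hgmono : StrictMono (rep n ∘ g) := fun a b hab => by
    simp only [Function.comp_apply, hg]
    exact Nat.succ_lt_succ (Nat.add_lt_add_left hab i)
  have himg : univ.image (Fin.snoc g y) = cSeg n (1 + i) K ∪ {y} := by
    rw [image_univ_snoc, image_univ_add_natCast, insert_eq, union_comm]
  have hvanish : ∀ e : ℕ, y = 1 + e → i ≤ e → e < i + K →
      pluck N (cSeg n (1 + i) K ∪ {y}) = 0 ∧ (N.submatrix id (Fin.snoc g y)).det = 0 := by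
    intro e hy hie hei
    have hge : g ⟨e - i, by omega⟩ = y := by
      simp only [g, hy, add_assoc, ← Nat.cast_add, Nat.add_sub_cancel' hie]
    constructor
    · rw [union_eq_left.2 (singleton_subset_iff.2 (hge ▸ mem_image_of_mem _
        (mem_range.2 (by omega : e - i < K)))), pluck_eq_zero_of_card_ne]
      rw [card_cSeg _ (by omega)]
      omega
    · refine Matrix.det_zero_of_column_eq (i := Fin.castSucc ⟨e - i, by omega⟩)
        (j := Fin.last K) (Fin.castSucc_lt_last _).ne fun a => ?_
      rw [Matrix.submatrix_apply, Matrix.submatrix_apply, Fin.snoc_castSucc, Fin.snoc_last,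
        id, hge]
  rw [wrapSign_one_add_natCast hdn (by omega)]
  by_cases hwrap : n ≤ d + j
  · have hy : y = 1 + ((d + j - n : ℕ) : ZMod n) := by
      simp only [y, Nat.cast_sub hwrap, ZMod.natCast_self, sub_zero]
      push_cast
      ring
    rw [if_pos hwrap]
    by_cases hbefore : d + j - n < i
    · have hcons : StrictMono (rep n ∘ Fin.cons y g) := by
        rw [Fin.comp_cons, Fin.strictMono_cons]
        refine ⟨fun t => ?_, hgmono⟩
        rw [Function.comp_apply, hg, hy, rep_one_add_natCast (by omega)]
        omega
      rw [← himg, image_univ_snoc, ← image_univ_cons, pluck_image_eq_det _ hcons,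
        det_submatrix_snoc, ← mul_assoc, ← pow_add, Even.neg_one_pow ⟨K, rfl⟩, one_mul]
    · obtain ⟨h1, h2⟩ := hvanish _ hy (by omega) (by omega)
      rw [h1, h2, mul_zero]
  · have hy : y = 1 + ((d + j : ℕ) : ZMod n) := by
      simp only [y]
      push_cast
      ring
    rw [if_neg hwrap, one_mul]
    by_cases hafter : i + K ≤ d + j
    · rw [← himg, pluck_image_eq_det]
      rw [Fin.comp_snoc]
      refine strictMono_snoc hgmono fun t => ?_
      rw [Function.comp_apply, hg, hy, rep_one_add_natCast (by omega)]
      omega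
    · obtain ⟨h1, h2⟩ := hvanish _ hy (by omega) (by omega)
      rw [h1, h2]

theorem det_pluck_cSeg_union_one_add (N : Matrix (Fin (K + 1)) (ZMod n) R) {d : ℕ}
    (hKd : K ≤ d) (hdn : d < n) (hn : 1 < n) (hKn : 2 * K < n) :
    (Matrix.of fun i j : Fin (K + 1) =>
      pluck N (cSeg n (1 + (i : ℕ)) K ∪ {1 + (d : ZMod n) + (j : ℕ)})).det =
      (∏ l ∈ range K, pluck N (cSeg n (1 + l) (K + 1))) * pluck N (cSeg n (1 + d) (K + 1)) := by
  set v : ℕ → Fin (K + 1) → R := fun t a => N a (1 + t)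
  have hwin : ∀ s : ℕ, window v s =
      N.submatrix id fun t : Fin (K + 1) => 1 + (s : ZMod n) + (t : ℕ) := by
    intro s
    ext a t
    simp only [window, v, Matrix.of_apply, Matrix.submatrix_apply, id]
    push_cast
    ring_nf
  have hcol : ∀ i j : Fin (K + 1),
      N.submatrix id (Fin.snoc (fun t : Fin K => 1 + ((i : ℕ) : ZMod n) + (t : ℕ))
        (1 + (d : ZMod n) + (j : ℕ))) =
      (window v i).updateCol (Fin.last K) fun a => window v d a j := by
    intro i j
    ext a t
    refine Fin.lastCases ?_ (fun t => ?_) t <;> simp [hwin]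
  have hentries : (Matrix.of fun i j : Fin (K + 1) =>
      pluck N (cSeg n (1 + (i : ℕ)) K ∪ {1 + (d : ZMod n) + (j : ℕ)})) =
      Matrix.of fun i j : Fin (K + 1) => wrapSign K d (1 + ((j : ℕ) : ZMod n)) *
        (Matrix.of fun i j : Fin (K + 1) =>
          ((window v i).updateCol (Fin.last K) fun a => window v d a j).det) i j := by
    ext i j
    rw [Matrix.of_apply, Matrix.of_apply, Matrix.of_apply,
      pluck_cSeg_union_singleton N (by omega) (by omega) hKd hdn hKn, hcol]
  have hlast : pluck N (cSeg n (1 + d) (K + 1)) =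
      (∏ j : Fin (K + 1), wrapSign K d (1 + ((j : ℕ) : ZMod n))) * (window v d).det := by
    have h0 := pluck_cSeg_one_add (N.submatrix id (· + (d : ZMod n))) (s := 0) (by omega)
    rw [Nat.cast_zero, add_zero] at h0
    rw [pluck_cSeg_add_natCast hn N 1, prod_cSeg _ _ (by omega),
      ← Fin.prod_univ_eq_prod_range, h0, hwin, Matrix.submatrix_submatrix]
    congr 3
    funext t
    simp only [Function.comp_apply]
    ring
  have hwindows : ∀ l ∈ range K, pluck N (cSeg n (1 + l) (K + 1)) = (window v l).det := by
    intro l hl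
    rw [pluck_cSeg_one_add N (by rw [mem_range] at hl; omega), hwin]
  rw [hentries, Matrix.det_mul_row, det_det_updateCol_window, hlast, prod_congr rfl hwindows]
  ring

end BaseFrame

theorem statement1 {R : Type*} [CommRing R] (k n : ℕ) (hk : 2 ≤ k) (hkn : 2 * k ≤ n)
    (M : Matrix (Fin k) (ZMod n) R) (r m : ZMod n)
    (hm : m ∈ cIcc n (r + (k : ZMod n) - 1) (r - 1)) :
    Matrix.det (Matrix.of fun i j : Fin k =>
        pluck M (cSeg n (r + ((i : ℕ) : ZMod n)) (k - 1) ∪ {m + ((j : ℕ) : ZMod n)})) =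
      (∏ l ∈ Finset.range (k - 1), pluck M (cSeg n (r + (l : ZMod n)) k)) *
        pluck M (cSeg n m k) := by
  obtain ⟨K, rfl⟩ : ∃ K, k = K + 1 := ⟨k - 1, by omega⟩
  have : NeZero n := ⟨by omega⟩
  obtain ⟨d, hKd, hdn, rfl⟩ := exists_eq_add_of_mem_cIcc (by omega) (by omega) hm
  obtain ⟨b, rfl⟩ : ∃ b : ℕ, r = 1 + b := ⟨(r - 1).val, by simp⟩
  simp only [Nat.add_sub_cancel, add_right_comm _ (b : ZMod n)]
  rw [det_pluck_cSeg_union_add_natCast (by omega) (by omega),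
    det_pluck_cSeg_union_one_add _ (by omega) hdn (by omega) (by omega),
    prod_congr rfl fun l _ => pluck_cSeg_add_natCast (by omega) M _ _ b,
    pluck_cSeg_add_natCast (by omega) M (1 + d) _ b, prod_mul_distrib,
    ← prod_prod_cSeg_comm _ _ (by omega)]
  ring
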